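/- (Henry's inequality / singular Gronwall) Let 0 ≤ σ < 1, a ≥ 0, b ≥ 0, κ ∈ ℝ, T > 0 and let u : [0,T] → [0,∞) be continuous and satisfy u(t) ≤ a e^{-κt} + b ∫_0^t (t-s)^{-σ} e^{-κ(t-s)} u(s) ds for all t ∈ [0,T]. Then u(t) ≤ a e^{-κt} E_σ(θ t) for all t ∈ [0,T], where E_σ(x) = Σ_{n≥0} x^{n(1-σ)}/Γ(n(1-σ)+1) and θ = (bΓ(1-σ))^{1/(1-σ)}. In particular u is bounded on [0,T]. -/

import Mathlib

open MeasureTheory Filter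

lemma henry_gamma_step {y δ : ℝ} (hy : 0 < y) (hδ0 : 0 < δ) (hδ1 : δ ≤ 1) :
    Real.Gamma (y + 1) ≤ Real.Gamma (y + δ) * (y + δ) ^ (1 - δ) := by
  rcases eq_or_lt_of_le hδ1 with h1 | h1
  · rw [h1]; simp
  · have key := Real.Gamma_mul_add_mul_le_rpow_Gamma_mul_rpow_Gamma
      (s := y + δ) (t := y + δ + 1) (a := δ) (b := 1 - δ)
      (by positivity) (by positivity) hδ0 (by linarith) (by ring)
    have e : δ * (y + δ) + (1 - δ) * (y + δ + 1) = y + 1 := by ring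
    rw [e, Real.Gamma_add_one (by positivity : y + δ ≠ 0)] at key
    have hG : 0 < Real.Gamma (y + δ) := Real.Gamma_pos_of_pos (by positivity)
    calc Real.Gamma (y + 1)
        ≤ Real.Gamma (y + δ) ^ δ * ((y + δ) * Real.Gamma (y + δ)) ^ (1 - δ) := key
      _ = Real.Gamma (y + δ) * (y + δ) ^ (1 - δ) := by
          rw [Real.mul_rpow (by positivity) hG.le, ← mul_assoc,
            mul_comm (Real.Gamma (y + δ) ^ δ), mul_assoc, ← Real.rpow_add hG]
          norm_num; ring

lemma henry_summable {δ : ℝ} (hδ0 : 0 < δ) (hδ1 : δ ≤ 1) {x : ℝ} (hx : 0 ≤ x) :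
    Summable (fun n : ℕ => x ^ ((n : ℝ) * δ) / Real.Gamma ((n : ℝ) * δ + 1)) := by
  apply summable_of_ratio_norm_eventually_le (r := 1/2) (by norm_num)
  have htend : Tendsto (fun n : ℕ => 2 * x ^ δ * ((n : ℝ) * δ + 1) ^ (-δ)) atTop (nhds 0) := by
    have h1 : Tendsto (fun n : ℕ => (n : ℝ) * δ + 1) atTop atTop := by
      apply tendsto_atTop_add_const_right
      exact Tendsto.atTop_mul_const hδ0 tendsto_natCast_atTop_atTop
    have h2 := ((tendsto_rpow_neg_atTop hδ0).comp h1).const_mul (2 * x ^ δ)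
    simpa using h2
  have hev := htend.eventually_lt_const (by norm_num : (0:ℝ) < 1/2)
  filter_upwards [hev] with n hn
  set y : ℝ := (n : ℝ) * δ + 1 with hy
  have hy1 : 1 ≤ y := by
    have : 0 ≤ (n : ℝ) * δ := by positivity
    simp [hy]; linarith
  have hy0 : 0 < y := by linarith
  have hGy : 0 < Real.Gamma y := Real.Gamma_pos_of_pos hy0
  have hGyd : 0 < Real.Gamma (y + δ) := Real.Gamma_pos_of_pos (by linarith)
  have hexp : ((n + 1 : ℕ) : ℝ) * δ = δ + (n : ℝ) * δ := by push_cast; ring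
  have hxsplit : x ^ (((n + 1 : ℕ) : ℝ) * δ) = x ^ δ * x ^ ((n : ℝ) * δ) := by
    rw [hexp, Real.rpow_add' hx (by positivity)]
  have harg : ((n + 1 : ℕ) : ℝ) * δ + 1 = y + δ := by rw [hy]; push_cast; ring
  have hstep : y * Real.Gamma y ≤ Real.Gamma (y + δ) * (y + δ) ^ (1 - δ) := by
    have := henry_gamma_step hy0 hδ0 hδ1
    rwa [Real.Gamma_add_one (ne_of_gt hy0)] at this
  have hQle : (y + δ) ^ (1 - δ) ≤ 2 * y ^ (1 - δ) := by
    have h2y : y + δ ≤ 2 * y := by linarith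
    calc (y + δ) ^ (1 - δ) ≤ (2 * y) ^ (1 - δ) := by
          apply Real.rpow_le_rpow (by linarith) h2y (by linarith)
      _ = 2 ^ (1 - δ) * y ^ (1 - δ) := Real.mul_rpow (by norm_num) hy0.le
      _ ≤ 2 * y ^ (1 - δ) := by
          have : (2:ℝ) ^ (1 - δ) ≤ 2 ^ (1:ℝ) :=
            Real.rpow_le_rpow_of_exponent_le (by norm_num) (by linarith)
          have hyp : 0 ≤ y ^ (1 - δ) := Real.rpow_nonneg hy0.le _
          nlinarith [this, Real.rpow_one (2:ℝ)]
  have hyrw : y ^ (1 - δ) = y * y ^ (-δ) := by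
    rw [show (1 - δ) = 1 + (-δ) by ring, Real.rpow_add hy0, Real.rpow_one]
  have hkey : x ^ δ * (y + δ) ^ (1 - δ) ≤ (1/2) * y := by
    have hxd : 0 ≤ x ^ δ := Real.rpow_nonneg hx _
    have h1 := mul_le_mul_of_nonneg_left hQle hxd
    have h2 : x ^ δ * (2 * y ^ (1 - δ)) = (2 * x ^ δ * y ^ (-δ)) * y := by
      rw [hyrw]; ring
    calc x ^ δ * (y + δ) ^ (1 - δ) ≤ x ^ δ * (2 * y ^ (1 - δ)) := h1
      _ = (2 * x ^ δ * y ^ (-δ)) * y := h2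
      _ ≤ (1/2) * y := mul_le_mul_of_nonneg_right (le_of_lt hn) hy0.le
  have hterm : ∀ m : ℕ, 0 ≤ x ^ ((m : ℝ) * δ) / Real.Gamma ((m : ℝ) * δ + 1) := by
    intro m
    have := Real.Gamma_pos_of_pos (show (0:ℝ) < (m : ℝ) * δ + 1 by positivity)
    positivity
  rw [Real.norm_eq_abs, Real.norm_eq_abs, abs_of_nonneg (hterm _), abs_of_nonneg (hterm _)]
  rw [hxsplit, harg]
  rw [div_le_iff₀ hGyd]
  have hXn : 0 ≤ x ^ ((n : ℝ) * δ) := Real.rpow_nonneg hx _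
  have hQ : 0 < (y + δ) ^ (1 - δ) := Real.rpow_pos_of_pos (by linarith) _
  rw [show (1:ℝ)/2 * (x ^ ((n : ℝ) * δ) / Real.Gamma y) * Real.Gamma (y + δ)
      = (x ^ ((n : ℝ) * δ)) * ((1/2) * Real.Gamma (y + δ) / Real.Gamma y) by ring]
  have final : x ^ δ ≤ (1/2) * Real.Gamma (y + δ) / Real.Gamma y := by
    rw [le_div_iff₀ hGy]
    have hxd : 0 ≤ x ^ δ := Real.rpow_nonneg hx _
    nlinarith [mul_le_mul_of_nonneg_left hstep hxd, mul_le_mul_of_nonneg_right hkey hGy.le,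
      mul_pos hGyd hQ]
  calc x ^ δ * x ^ ((n : ℝ) * δ) = x ^ ((n : ℝ) * δ) * x ^ δ := by ring
    _ ≤ x ^ ((n : ℝ) * δ) * ((1/2) * Real.Gamma (y + δ) / Real.Gamma y) :=
        mul_le_mul_of_nonneg_left final hXn

lemma henry_beta_real {α σ : ℝ} (hα : 0 ≤ α) (hσ : σ < 1) :
    ∫ x in (0:ℝ)..1, x ^ α * (1 - x) ^ (-σ) =
      Real.Gamma (α + 1) * Real.Gamma (1 - σ) / Real.Gamma (α + 1 + (1 - σ)) := by
  have hs : 0 < Complex.re ((α : ℂ) + 1) := by simp; linarith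
  have ht : 0 < Complex.re (((1 - σ) : ℝ) : ℂ) := by simp; linarith
  have key := Complex.Gamma_mul_Gamma_eq_betaIntegral hs ht
  have hbeta : Complex.betaIntegral ((α : ℂ) + 1) (((1 - σ) : ℝ) : ℂ)
      = ((∫ x in (0:ℝ)..1, x ^ α * (1 - x) ^ (-σ) : ℝ) : ℂ) := by
    rw [Complex.betaIntegral, ← intervalIntegral.integral_ofReal]
    apply intervalIntegral.integral_congr
    intro x hx
    rw [Set.uIcc_of_le (by norm_num : (0:ℝ) ≤ 1)] at hx
    obtain ⟨hx0, hx1⟩ := hx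
    have h1 : ((x ^ α * (1 - x) ^ (-σ) : ℝ) : ℂ)
        = ((x ^ α : ℝ) : ℂ) * (((1 - x) ^ (-σ) : ℝ) : ℂ) := by push_cast; ring
    simp only []
    rw [h1, Complex.ofReal_cpow hx0, Complex.ofReal_cpow (by linarith : (0:ℝ) ≤ 1 - x)]
    have e1 : (α : ℂ) + 1 - 1 = (α : ℂ) := by ring
    have e2 : (((1 - σ) : ℝ) : ℂ) - 1 = ((-σ : ℝ) : ℂ) := by push_cast; ring
    rw [e1, e2]
    push_cast
    ring
  rw [hbeta] at key
  have harg : (α : ℂ) + 1 + (((1 - σ) : ℝ) : ℂ) = ((α + 1 + (1 - σ) : ℝ) : ℂ) := by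
    push_cast; ring
  have harg2 : (α : ℂ) + 1 = ((α + 1 : ℝ) : ℂ) := by push_cast; ring
  rw [harg, harg2, Complex.Gamma_ofReal, Complex.Gamma_ofReal, Complex.Gamma_ofReal] at key
  have key2 : Real.Gamma (α + 1) * Real.Gamma (1 - σ)
      = Real.Gamma (α + 1 + (1 - σ)) * ∫ x in (0:ℝ)..1, x ^ α * (1 - x) ^ (-σ) := by
    exact_mod_cast key
  have hpos : 0 < Real.Gamma (α + 1 + (1 - σ)) := Real.Gamma_pos_of_pos (by linarith)
  field_simp [ne_of_gt hpos] at key2 ⊢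
  linarith [key2]

lemma henry_beta_Ioc {σ : ℝ} (hσ1 : σ < 1) {α t : ℝ} (hα : 0 ≤ α) (ht : 0 ≤ t) :
    ∫ s in Set.Ioc (0:ℝ) t, (t - s) ^ (-σ) * s ^ α =
      t ^ (α + (1 - σ)) *
        (Real.Gamma (α + 1) * Real.Gamma (1 - σ) / Real.Gamma (α + 1 + (1 - σ))) := by
  rcases eq_or_lt_of_le ht with rfl | htpos
  · rw [Set.Ioc_self, Measure.restrict_empty, integral_zero_measure,
      Real.zero_rpow (ne_of_gt (by linarith : (0:ℝ) < α + (1 - σ))), zero_mul]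
  · rw [← intervalIntegral.integral_of_le ht]
    have hsub := intervalIntegral.integral_comp_mul_left
      (a := (0:ℝ)) (b := 1) (fun s => (t - s) ^ (-σ) * s ^ α) (ne_of_gt htpos)
    simp only [mul_zero, mul_one] at hsub
    have h2 : (∫ s in (0:ℝ)..t, (t - s) ^ (-σ) * s ^ α)
        = t * ∫ x in (0:ℝ)..1, (t - t * x) ^ (-σ) * (t * x) ^ α := by
      rw [hsub, smul_eq_mul, ← mul_assoc, mul_inv_cancel₀ (ne_of_gt htpos), one_mul]
    rw [h2]
    have h3 : (∫ x in (0:ℝ)..1, (t - t * x) ^ (-σ) * (t * x) ^ α)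
        = (t ^ (-σ) * t ^ α) * ∫ x in (0:ℝ)..1, x ^ α * (1 - x) ^ (-σ) := by
      rw [← intervalIntegral.integral_const_mul]
      apply intervalIntegral.integral_congr
      intro x hx
      rw [Set.uIcc_of_le (by norm_num : (0:ℝ) ≤ 1)] at hx
      obtain ⟨hx0, hx1⟩ := hx
      show (t - t * x) ^ (-σ) * (t * x) ^ α = t ^ (-σ) * t ^ α * (x ^ α * (1 - x) ^ (-σ))
      have e1 : t - t * x = t * (1 - x) := by ring
      rw [e1, Real.mul_rpow ht (by linarith), Real.mul_rpow ht hx0]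
      ring
    rw [h3, henry_beta_real hα hσ1, ← mul_assoc]
    congr 1
    rw [show α + (1 - σ) = 1 + (-σ) + α by ring, Real.rpow_add htpos, Real.rpow_add htpos,
      Real.rpow_one]
    ring

lemma henry_integrableOn {σ : ℝ} (hσ1 : σ < 1) {t : ℝ} (ht : 0 ≤ t)
    {g : ℝ → ℝ} (hg : ContinuousOn g (Set.Icc 0 t)) :
    IntegrableOn (fun s => (t - s) ^ (-σ) * g s) (Set.Ioc 0 t) := by
  obtain ⟨C, hC⟩ := (isCompact_Icc (a := (0:ℝ)) (b := t)).exists_bound_of_continuousOn hg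
  have hker : IntegrableOn (fun s : ℝ => (t - s) ^ (-σ)) (Set.Ioc 0 t) := by
    have base : IntervalIntegrable (fun s : ℝ => s ^ (-σ)) volume 0 t :=
      intervalIntegral.intervalIntegrable_rpow' (by linarith)
    have comp := base.comp_sub_left t
    simp only [sub_zero, sub_self] at comp
    exact (intervalIntegrable_iff_integrableOn_Ioc_of_le ht).mp comp.symm
  have hCnn : 0 ≤ C := le_trans (norm_nonneg _) (hC 0 (by constructor <;> linarith))
  apply Integrable.mono' (hker.const_mul C)
  · exact hker.aestronglyMeasurable.mul
      ((hg.mono Set.Ioc_subset_Icc_self).aestronglyMeasurable measurableSet_Ioc)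
  · rw [ae_restrict_iff' measurableSet_Ioc]
    apply Filter.Eventually.of_forall
    intro s hs
    have hts : 0 ≤ t - s := by linarith [hs.2]
    have hrnn : 0 ≤ (t - s) ^ (-σ) := Real.rpow_nonneg hts _
    calc ‖(t - s) ^ (-σ) * g s‖ = (t - s) ^ (-σ) * ‖g s‖ := by
          rw [norm_mul, Real.norm_eq_abs, abs_of_nonneg hrnn]
      _ ≤ (t - s) ^ (-σ) * C := by
          apply mul_le_mul_of_nonneg_left _ hrnn
          exact hC s ⟨hs.1.le, hs.2⟩
      _ = C * (t - s) ^ (-σ) := by ring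

/-- Henry's inequality (singular Gronwall, Lemma 7.1.1 of Henry). -/
theorem stmt_5 (σ a b κ T : ℝ) (hσ0 : 0 ≤ σ) (hσ1 : σ < 1)
    (ha : 0 ≤ a) (hb : 0 ≤ b) (hT : 0 < T)
    (u : ℝ → ℝ) (hu : ContinuousOn u (Set.Icc 0 T))
    (hnn : ∀ t ∈ Set.Icc (0 : ℝ) T, 0 ≤ u t)
    (hineq : ∀ t ∈ Set.Icc (0 : ℝ) T,
      u t ≤ a * Real.exp (-κ * t)
        + b * ∫ s in Set.Ioc (0 : ℝ) t, (t - s) ^ (-σ) * Real.exp (-κ * (t - s)) * u s) :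
    (∀ t ∈ Set.Icc (0 : ℝ) T,
      u t ≤ a * Real.exp (-κ * t) *
        ∑' n : ℕ, ((b * Real.Gamma (1 - σ)) ^ (1 / (1 - σ)) * t) ^ ((n : ℝ) * (1 - σ)) /
          Real.Gamma ((n : ℝ) * (1 - σ) + 1)) ∧
    ∃ M : ℝ, ∀ t ∈ Set.Icc (0 : ℝ) T, u t ≤ M := by
  constructor
  · -- main estimate
    set δ : ℝ := 1 - σ with hδ
    have hδ0 : 0 < δ := by rw [hδ]; linarith
    have hδ1 : δ ≤ 1 := by rw [hδ]; linarith
    have hΓδ : 0 < Real.Gamma δ := Real.Gamma_pos_of_pos hδ0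
    set γ : ℝ := b * Real.Gamma δ with hγ
    have hγ0 : 0 ≤ γ := by rw [hγ]; positivity
    -- the exponentially rescaled function
    set v : ℝ → ℝ := fun t => Real.exp (κ * t) * u t with hv
    have hvcont : ContinuousOn v (Set.Icc 0 T) :=
      ((Real.continuous_exp.comp (continuous_const.mul continuous_id)).continuousOn).mul hu
    have hvnn : ∀ t ∈ Set.Icc (0:ℝ) T, 0 ≤ v t := fun t htm =>
      mul_nonneg (Real.exp_nonneg _) (hnn t htm)
    obtain ⟨tm, htm, hMmax⟩ := isCompact_Icc.exists_isMaxOn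
      (Set.nonempty_Icc.mpr hT.le) hvcont
    set M : ℝ := v tm with hM
    have hMnn : 0 ≤ M := hvnn tm htm
    have hMv : ∀ t ∈ Set.Icc (0:ℝ) T, v t ≤ M := fun t h => hMmax h
    -- the inequality for v
    have hvineq : ∀ t ∈ Set.Icc (0:ℝ) T,
        v t ≤ a + b * ∫ s in Set.Ioc (0:ℝ) t, (t - s) ^ (-σ) * v s := by
      intro t htmem
      have h := hineq t htmem
      have hexp : (0:ℝ) < Real.exp (κ * t) := Real.exp_pos _
      have h2 := mul_le_mul_of_nonneg_left h hexp.le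
      have e0 : Real.exp (κ * t) * (a * Real.exp (-κ * t)) = a := by
        rw [show Real.exp (κ * t) * (a * Real.exp (-κ * t))
            = a * (Real.exp (κ * t) * Real.exp (-κ * t)) by ring, ← Real.exp_add,
          show κ * t + -κ * t = 0 by ring, Real.exp_zero, mul_one]
      have e1 : Real.exp (κ * t) *
          (b * ∫ s in Set.Ioc (0:ℝ) t, (t - s) ^ (-σ) * Real.exp (-κ * (t - s)) * u s)
          = b * ∫ s in Set.Ioc (0:ℝ) t, (t - s) ^ (-σ) * v s := by
        rw [show Real.exp (κ * t) *
            (b * ∫ s in Set.Ioc (0:ℝ) t, (t - s) ^ (-σ) * Real.exp (-κ * (t - s)) * u s)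
            = b * (Real.exp (κ * t) *
              ∫ s in Set.Ioc (0:ℝ) t, (t - s) ^ (-σ) * Real.exp (-κ * (t - s)) * u s) by ring,
          ← integral_const_mul]
        congr 1
        apply setIntegral_congr_fun measurableSet_Ioc
        intro s _
        have eexp : Real.exp (κ * t) * Real.exp (-κ * (t - s)) = Real.exp (κ * s) := by
          rw [← Real.exp_add]; congr 1; ring
        simp only [hv]
        linear_combination ((t - s) ^ (-σ) * u s) * eexp
      calc v t = Real.exp (κ * t) * u t := rfl
        _ ≤ Real.exp (κ * t) * (a * Real.exp (-κ * t)
            + b * ∫ s in Set.Ioc (0:ℝ) t, (t - s) ^ (-σ) * Real.exp (-κ * (t - s)) * u s) := h2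
        _ = a + b * ∫ s in Set.Ioc (0:ℝ) t, (t - s) ^ (-σ) * v s := by
            rw [mul_add, e0, e1]
    -- the iterates
    set c : ℕ → ℝ → ℝ :=
      fun n s => γ ^ n * s ^ ((n : ℝ) * δ) / Real.Gamma ((n : ℝ) * δ + 1) with hc
    have hc0 : ∀ s : ℝ, c 0 s = 1 := by
      intro s
      simp [hc, Real.Gamma_one]
    have hccont : ∀ n : ℕ, Continuous (fun s => c n s) := by
      intro n
      apply Continuous.div_const
      apply Continuous.mul continuous_const
      rw [continuous_iff_continuousAt]
      intro x
      exact Real.continuousAt_rpow_const x _ (Or.inr (by positivity))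
    have hcnn : ∀ n : ℕ, ∀ s : ℝ, 0 ≤ s → 0 ≤ c n s := by
      intro n s hs
      have := Real.Gamma_pos_of_pos (show (0:ℝ) < (n : ℝ) * δ + 1 by positivity)
      have h2 : 0 ≤ s ^ ((n : ℝ) * δ) := Real.rpow_nonneg hs _
      rw [hc]
      positivity
    -- the key beta computation
    have hbetastep : ∀ (k : ℕ) (t : ℝ), 0 ≤ t →
        b * ∫ s in Set.Ioc (0:ℝ) t, (t - s) ^ (-σ) * c k s = c (k + 1) t := by
      intro k t ht0
      have hrw : (fun s : ℝ => (t - s) ^ (-σ) * c k s)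
          = fun s => (γ ^ k / Real.Gamma ((k : ℝ) * δ + 1)) * ((t - s) ^ (-σ) * s ^ ((k:ℝ) * δ)) := by
        funext s
        simp only [hc]
        ring
      rw [hrw, integral_const_mul, henry_beta_Ioc hσ1 (by positivity) ht0]
      have e1 : (k:ℝ) * δ + (1 - σ) = ((k+1 : ℕ) : ℝ) * δ := by rw [hδ]; push_cast; ring
      have e2 : (k:ℝ) * δ + 1 + (1 - σ) = ((k+1 : ℕ) : ℝ) * δ + 1 := by rw [hδ]; push_cast; ring
      have hΓ1 : Real.Gamma ((k:ℝ) * δ + 1) ≠ 0 :=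
        ne_of_gt (Real.Gamma_pos_of_pos (by positivity))
      have hΓ2 : Real.Gamma (((k+1:ℕ):ℝ) * δ + 1) ≠ 0 :=
        ne_of_gt (Real.Gamma_pos_of_pos (by positivity))
      rw [e1, e2]
      simp only [hc]
      rw [show Real.Gamma (1 - σ) = Real.Gamma δ by rw [hδ]]
      field_simp
      ring
    -- the induction
    have hP : ∀ n : ℕ, ∀ t ∈ Set.Icc (0:ℝ) T,
        v t ≤ a * (∑ k ∈ Finset.range n, c k t) + M * c n t := by
      intro n
      induction n with
      | zero =>
        intro t htmem
        simpa [hc0] using hMv t htmem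
      | succ n ih =>
        intro t htmem
        obtain ⟨ht0, htT⟩ := htmem
        have hint_v : IntegrableOn (fun s => (t - s) ^ (-σ) * v s) (Set.Ioc 0 t) :=
          henry_integrableOn hσ1 ht0
            (hvcont.mono (Set.Icc_subset_Icc le_rfl htT))
        have hint_k : ∀ k : ℕ,
            IntegrableOn (fun s => (t - s) ^ (-σ) * c k s) (Set.Ioc 0 t) := fun k =>
          henry_integrableOn hσ1 ht0 ((hccont k).continuousOn)
        have hint_w : IntegrableOn
            (fun s => (t - s) ^ (-σ) * (a * (∑ k ∈ Finset.range n, c k s) + M * c n s))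
            (Set.Ioc 0 t) := by
          apply henry_integrableOn hσ1 ht0
          apply Continuous.continuousOn
          exact (continuous_const.mul (continuous_finset_sum _ (fun k _ => hccont k))).add
            (continuous_const.mul (hccont n))
        have hmono : (∫ s in Set.Ioc (0:ℝ) t, (t - s) ^ (-σ) * v s)
            ≤ ∫ s in Set.Ioc (0:ℝ) t,
                (t - s) ^ (-σ) * (a * (∑ k ∈ Finset.range n, c k s) + M * c n s) := by
          apply setIntegral_mono_on hint_v hint_w measurableSet_Ioc
          intro s hs
          have hsIcc : s ∈ Set.Icc (0:ℝ) T := ⟨hs.1.le, le_trans hs.2 htT⟩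
          have hker : (0:ℝ) ≤ (t - s) ^ (-σ) :=
            Real.rpow_nonneg (by linarith [hs.2]) _
          exact mul_le_mul_of_nonneg_left (ih s hsIcc) hker
        have hsplit : (∫ s in Set.Ioc (0:ℝ) t,
              (t - s) ^ (-σ) * (a * (∑ k ∈ Finset.range n, c k s) + M * c n s))
            = (∑ k ∈ Finset.range n,
                a * ∫ s in Set.Ioc (0:ℝ) t, (t - s) ^ (-σ) * c k s)
              + M * ∫ s in Set.Ioc (0:ℝ) t, (t - s) ^ (-σ) * c n s := by
          have hfun : (fun s : ℝ =>
                (t - s) ^ (-σ) * (a * (∑ k ∈ Finset.range n, c k s) + M * c n s))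
              = (fun s : ℝ => (∑ k ∈ Finset.range n, a * ((t - s) ^ (-σ) * c k s))
                  + M * ((t - s) ^ (-σ) * c n s)) := by
            funext s
            rw [mul_add, Finset.mul_sum, Finset.mul_sum]
            congr 1
            · exact Finset.sum_congr rfl fun k _ => by ring
            · ring
          rw [hfun]
          rw [integral_add (integrable_finset_sum _
              (fun k _ => ((hint_k k).const_mul a))) ((hint_k n).const_mul M)]
          rw [integral_finset_sum _ (fun k _ => ((hint_k k).const_mul a))]
          simp only [integral_const_mul]
        calc v t ≤ a + b * ∫ s in Set.Ioc (0:ℝ) t, (t - s) ^ (-σ) * v s :=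
              hvineq t ⟨ht0, htT⟩
          _ ≤ a + b * ∫ s in Set.Ioc (0:ℝ) t,
                (t - s) ^ (-σ) * (a * (∑ k ∈ Finset.range n, c k s) + M * c n s) :=
              (add_le_add_iff_left a).mpr (mul_le_mul_of_nonneg_left hmono hb)
          _ = a + (a * (∑ k ∈ Finset.range n,
                b * ∫ s in Set.Ioc (0:ℝ) t, (t - s) ^ (-σ) * c k s)
              + M * (b * ∫ s in Set.Ioc (0:ℝ) t, (t - s) ^ (-σ) * c n s)) := by
              rw [hsplit, mul_add, Finset.mul_sum, Finset.mul_sum]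
              congr 1
              congr 1
              · exact Finset.sum_congr rfl fun k _ => by ring
              · ring
          _ = a + (a * (∑ k ∈ Finset.range n, c (k + 1) t) + M * c (n + 1) t) := by
              congr 2
              · congr 1
                apply Finset.sum_congr rfl
                intro k _
                exact hbetastep k t ht0
              · rw [hbetastep n t ht0]
          _ = a * (∑ k ∈ Finset.range (n + 1), c k t) + M * c (n + 1) t := by
              rw [Finset.sum_range_succ']
              rw [hc0]
              ring
    -- pass to the limit
    intro t htmem
    obtain ⟨ht0, htT⟩ := htmem
    have hxnn : 0 ≤ γ ^ ((1:ℝ)/δ) * t := mul_nonneg (Real.rpow_nonneg hγ0 _) ht0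
    have hsum : Summable (fun n : ℕ =>
        (γ ^ ((1:ℝ)/δ) * t) ^ ((n : ℝ) * δ) / Real.Gamma ((n : ℝ) * δ + 1)) :=
      henry_summable hδ0 hδ1 hxnn
    have hceq : ∀ n : ℕ, c n t
        = (γ ^ ((1:ℝ)/δ) * t) ^ ((n : ℝ) * δ) / Real.Gamma ((n : ℝ) * δ + 1) := by
      intro n
      have hxpow : (γ ^ ((1:ℝ)/δ) * t) ^ ((n : ℝ) * δ) = γ ^ n * t ^ ((n : ℝ) * δ) := by
        rw [Real.mul_rpow (Real.rpow_nonneg hγ0 _) ht0, ← Real.rpow_natCast γ n,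
          ← Real.rpow_mul hγ0]
        congr 2
        field_simp
      rw [hc]
      rw [hxpow]
    have hsumc : Summable (fun n : ℕ => c n t) := by
      rw [show (fun n : ℕ => c n t) = fun n : ℕ =>
        (γ ^ ((1:ℝ)/δ) * t) ^ ((n : ℝ) * δ) / Real.Gamma ((n : ℝ) * δ + 1) from funext hceq]
      exact hsum
    have hS : Tendsto (fun n => ∑ k ∈ Finset.range n, c k t) atTop
        (nhds (∑' n, c n t)) := hsumc.hasSum.tendsto_sum_nat
    have hcz : Tendsto (fun n => c n t) atTop (nhds 0) := hsumc.tendsto_atTop_zero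
    have hlim : Tendsto (fun n => a * (∑ k ∈ Finset.range n, c k t) + M * c n t) atTop
        (nhds (a * (∑' n, c n t))) := by
      have := (hS.const_mul a).add (hcz.const_mul M)
      simpa using this
    have hvt : v t ≤ a * ∑' n, c n t :=
      ge_of_tendsto hlim (Filter.Eventually.of_forall (fun n => hP n t ⟨ht0, htT⟩))
    have humul : Real.exp (-κ * t) * v t = u t := by
      simp only [hv]
      rw [← mul_assoc, ← Real.exp_add, show -κ * t + κ * t = 0 by ring, Real.exp_zero, one_mul]
    have htsum : (∑' n, c n t) = ∑' (n : ℕ),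
        (γ ^ ((1:ℝ)/δ) * t) ^ ((n : ℝ) * δ) / Real.Gamma ((n : ℝ) * δ + 1) :=
      tsum_congr hceq
    calc u t = Real.exp (-κ * t) * v t := humul.symm
      _ ≤ Real.exp (-κ * t) * (a * ∑' n, c n t) :=
          mul_le_mul_of_nonneg_left hvt (Real.exp_nonneg _)
      _ = a * Real.exp (-κ * t) *
          ∑' (n : ℕ), (γ ^ ((1:ℝ)/δ) * t) ^ ((n : ℝ) * δ) / Real.Gamma ((n : ℝ) * δ + 1) := by
          rw [htsum]; ring
  · -- boundedness
    obtain ⟨tm, htm, hMmax⟩ := isCompact_Icc.exists_isMaxOn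
      (Set.nonempty_Icc.mpr hT.le) hu
    exact ⟨u tm, fun t ht => hMmax ht⟩
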